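/- arXiv:2401.08129 — 6 statements merged into one kernel-verified Lean document; each statement's English description precedes it below -/
import Mathlib

section
/- Fix n ≥ 1, m ∈ {1,…,n}, δ ∈ ℂ with δ ≠ 0, and let J be the n×n all-ones matrix. If λ ≠ 0 is an eigenvalue of S^m + δJ with eigenvector v, then ⟨v, 𝟙⟩ ≠ 0. -/
/-!
If `⟨v, 𝟙⟩ = 0` then `J v = 0`, so `v` would be an eigenvector of `S^m` alone for the nonzero
eigenvalue `λ`. But `S` is nilpotent, hence so is `S^m` for `m ≥ 1`, and a nilpotent matrix has
no nonzero eigenvalues.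
-/

/-- The `n × n` shift matrix `S` with `S j k = 1` iff `k = j + 1`. -/
def shiftMatrix (n : ℕ) : Matrix (Fin n) (Fin n) ℂ :=
  Matrix.of fun j k => if (j : ℕ) + 1 = (k : ℕ) then 1 else 0

/-- The `n × n` all-ones matrix. -/
def allOnes (n : ℕ) : Matrix (Fin n) (Fin n) ℂ := Matrix.of fun _ _ => 1

namespace Matrix

variable {ι R : Type*} [Fintype ι] [DecidableEq ι]

theorem pow_mulVec_eq_pow_smul [CommSemiring R] {A : Matrix ι ι R} {μ : R} {v : ι → R}
    (hv : A *ᵥ v = μ • v) (k : ℕ) : (A ^ k) *ᵥ v = μ ^ k • v := by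
  induction k with
  | zero => simp
  | succ k ih =>
    rw [pow_succ, ← mulVec_mulVec, hv, mulVec_smul, ih, smul_smul, ← pow_succ']

theorem eq_zero_of_isNilpotent_of_mulVec_eq_smul [CommRing R] [IsDomain R]
    {A : Matrix ι ι R} (hA : IsNilpotent A) {μ : R} (hμ : μ ≠ 0) {v : ι → R}
    (hv : A *ᵥ v = μ • v) : v = 0 := by
  obtain ⟨k, hk⟩ := hA
  have hvk : μ ^ k • v = 0 := by rw [← pow_mulVec_eq_pow_smul hv k, hk, zero_mulVec]
  exact (smul_eq_zero.mp hvk).resolve_left (pow_ne_zero k hμ)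

end Matrix

open Matrix

theorem shiftMatrix_pow_apply (n k : ℕ) (j l : Fin n) :
    (shiftMatrix n ^ k) j l = if (j : ℕ) + k = l then 1 else 0 := by
  induction k generalizing l with
  | zero => simp [one_apply, Fin.ext_iff]
  | succ k ih =>
    simp only [pow_succ, mul_apply, ih]
    simp only [shiftMatrix, of_apply, ite_mul, one_mul, zero_mul]
    by_cases h : (j : ℕ) + k < n
    · rw [Finset.sum_eq_single ⟨(j : ℕ) + k, h⟩ (fun b _ hb ↦ if_neg fun hc ↦ hb (Fin.ext hc.symm))
        (by simp)]
      simp [Nat.add_assoc]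
    · rw [Finset.sum_eq_zero fun b _ ↦ if_neg (by omega), if_neg (by omega)]

theorem shiftMatrix_pow_eq_zero {n k : ℕ} (hk : n ≤ k) : shiftMatrix n ^ k = 0 := by
  ext j l
  rw [shiftMatrix_pow_apply, if_neg (by omega), Matrix.zero_apply]

theorem isNilpotent_shiftMatrix (n : ℕ) : IsNilpotent (shiftMatrix n) :=
  ⟨n, shiftMatrix_pow_eq_zero le_rfl⟩

theorem allOnes_mulVec (n : ℕ) (v : Fin n → ℂ) : allOnes n *ᵥ v = fun _ ↦ ∑ j, v j := by
  ext
  simp [allOnes, mulVec, dotProduct]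

theorem stmt_2_general (n m : ℕ) (hm : 1 ≤ m)
    (δ : ℂ) (lam : ℂ) (hlam : lam ≠ 0)
    (v : Fin n → ℂ) (hv : v ≠ 0)
    (heig : (shiftMatrix n ^ m + δ • allOnes n).mulVec v = lam • v) :
    ∑ j : Fin n, v j * (starRingEnd ℂ) 1 ≠ 0 := by
  intro hsum
  have hJv : allOnes n *ᵥ v = 0 := by
    rw [allOnes_mulVec]
    exact funext fun _ ↦ by simpa using hsum
  rw [add_mulVec, smul_mulVec, hJv, smul_zero, add_zero] at heig
  have hnil : IsNilpotent (shiftMatrix n ^ m) :=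
    (isNilpotent_shiftMatrix n).pow_of_pos (Nat.one_le_iff_ne_zero.mp hm)
  exact hv (eq_zero_of_isNilpotent_of_mulVec_eq_smul hnil hlam heig)

/-- If `λ ≠ 0` is an eigenvalue of `S^m + δJ` with eigenvector `v`, then `⟨v, 𝟙⟩ ≠ 0`. -/
theorem stmt_2 (n m : ℕ) (hn : 1 ≤ n) (hm : 1 ≤ m) (hmn : m ≤ n)
    (δ : ℂ) (hδ : δ ≠ 0) (lam : ℂ) (hlam : lam ≠ 0)
    (v : Fin n → ℂ) (hv : v ≠ 0)
    (heig : (shiftMatrix n ^ m + δ • allOnes n).mulVec v = lam • v) :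
    ∑ j : Fin n, v j * (starRingEnd ℂ) 1 ≠ 0 :=
  stmt_2_general n m hm δ lam hlam v hv heig
end

section
/- Fix n ≥ 1, m ∈ {1,…,n}, δ ∈ ℂ \ {0}, and set p₁ = ⌊(n−1)/m⌋. A nonzero complex number z is an eigenvalue of S^m + δJ if and only if z^{p₁+1} − nδ · Σ_{k=0}^{p₁} (1 − (p₁−k)·(m/n)) z^k = 0. -/
open Matrix

theorem Matrix.exists_eigenvector_add_vecMulVec_iff {K ι : Type*} [Field K] [Fintype ι]
    {A : Matrix ι ι K} {u c w : ι → K} {z : K}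
    (hA : ∀ x, A *ᵥ x = z • x → x = 0) (hw : z • w - A *ᵥ w = u) :
    (∃ v, v ≠ 0 ∧ (A + vecMulVec u c) *ᵥ v = z • v) ↔ c ⬝ᵥ w = 1 := by
  have hmulVec : ∀ v, (A + vecMulVec u c) *ᵥ v = A *ᵥ v + (c ⬝ᵥ v) • u := fun v => by
    rw [add_mulVec, vecMulVec_mulVec, op_smul_eq_smul]
  constructor
  · rintro ⟨v, hv0, hv⟩
    set s := c ⬝ᵥ v
    have hv_eq : v = s • w := by
      refine sub_eq_zero.mp (hA _ ?_)
      rw [hmulVec] at hv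
      rw [mulVec_sub, mulVec_smul, smul_sub, smul_comm z s w, ← sub_eq_zero]
      linear_combination (norm := module) hv + s • hw
    have hs : s ≠ 0 := fun hs => hv0 (by rw [hv_eq, hs, zero_smul])
    have hs_eq : s * (c ⬝ᵥ w) = s * 1 := by
      rw [mul_one, ← smul_eq_mul, ← dotProduct_smul, ← hv_eq]
    exact mul_left_cancel₀ hs hs_eq
  · intro hcw
    refine ⟨w, fun h => by simp [h] at hcw, ?_⟩
    rw [hmulVec, hcw, one_smul, ← hw]
    abel

theorem shiftMatrix_mulVec {n : ℕ} (v : Fin n → ℂ) (j : Fin n) :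
    (shiftMatrix n *ᵥ v) j = if h : (j : ℕ) + 1 < n then v ⟨j + 1, h⟩ else 0 := by
  simp only [mulVec, dotProduct, shiftMatrix, of_apply, ite_mul, one_mul, zero_mul]
  split_ifs with h
  · rw [Finset.sum_eq_single ⟨j + 1, h⟩ (fun i _ hi => if_neg fun hji => hi (Fin.ext hji.symm))
      (by simp), if_pos rfl]
  · exact Finset.sum_eq_zero fun i _ => if_neg (by omega)

theorem shiftMatrix_pow_mulVec {n : ℕ} (k : ℕ) (v : Fin n → ℂ) (j : Fin n) :
    (shiftMatrix n ^ k *ᵥ v) j = if h : (j : ℕ) + k < n then v ⟨j + k, h⟩ else 0 := by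
  induction k generalizing j with
  | zero => simp
  | succ k ih =>
    rw [pow_succ', ← mulVec_mulVec, shiftMatrix_mulVec]
    by_cases h : (j : ℕ) + 1 < n
    · rw [dif_pos h, ih]
      simp only [Nat.add_right_comm _ 1 k]
      rfl
    · rw [dif_neg h, dif_neg (by omega)]

theorem Matrix.eq_zero_of_mulVec_eq_smul_of_isNilpotent {K ι : Type*} [Field K] [Fintype ι]
    [DecidableEq ι] {A : Matrix ι ι K} (hA : IsNilpotent A) {z : K} (hz : z ≠ 0) {v : ι → K}
    (hv : A *ᵥ v = z • v) : v = 0 := by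
  have hpow : ∀ k : ℕ, A ^ k *ᵥ v = z ^ k • v := fun k => by
    induction k with
    | zero => simp
    | succ k ih => rw [pow_succ, ← mulVec_mulVec, hv, mulVec_smul, ih, smul_smul, pow_succ']
  obtain ⟨k, hk⟩ := hA
  have := hpow k
  rw [hk, zero_mulVec, eq_comm, smul_eq_zero] at this
  exact this.resolve_left (pow_ne_zero k hz)

theorem smul_allOnes (n : ℕ) (δ : ℂ) : δ • allOnes n = vecMulVec (fun _ => δ) (fun _ => 1) := by
  ext; simp [allOnes, vecMulVec_apply]

/-- For `p = ⌊(n-1)/m⌋` and `j < n` this is the `j`-th entry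
`z ^ p + z ^ (p-1) + ⋯ + z ^ (p - ⌊(n-1-j)/m⌋)` of `z ^ (p + 1) • (z - S ^ m)⁻¹ 𝟙`;
it vanishes for `j ≥ n`. -/
noncomputable def resolventNumerator (n m p : ℕ) (z : ℂ) (j : ℕ) : ℂ :=
  ∑ k ∈ Finset.range (p + 1), if j + (p - k) * m < n then z ^ k else 0

theorem resolventNumerator_of_le {n m p : ℕ} (z : ℂ) {j : ℕ} (hj : n ≤ j) :
    resolventNumerator n m p z j = 0 :=
  Finset.sum_eq_zero fun k _ => if_neg (by omega)

theorem resolventNumerator_sub {n m p : ℕ} (hp : n ≤ (p + 1) * m) (z : ℂ) {j : ℕ} (hj : j < n) :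
    z * resolventNumerator n m p z j - resolventNumerator n m p z (j + m) = z ^ (p + 1) := by
  simp only [resolventNumerator, Finset.mul_sum, mul_ite, mul_zero, ← pow_succ']
  rw [Finset.sum_range_succ, Finset.sum_range_succ', Nat.sub_self, zero_mul, add_zero,
    if_pos hj, Nat.sub_zero, if_neg (by nlinarith)]
  have hshift : (∑ k ∈ Finset.range p, if j + m + (p - (k + 1)) * m < n then z ^ (k + 1) else 0)
      = ∑ k ∈ Finset.range p, if j + (p - k) * m < n then z ^ (k + 1) else 0 := by
    refine Finset.sum_congr rfl fun k hk => ?_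
    rw [Finset.mem_range] at hk
    rw [show p - k = p - (k + 1) + 1 by omega, add_mul, one_mul, add_right_comm j m, add_assoc]
  rw [hshift]
  ring

theorem sum_resolventNumerator {n m p : ℕ} (hp : p * m ≤ n) (z : ℂ) :
    ∑ j : Fin n, resolventNumerator n m p z j
      = ∑ k ∈ Finset.range (p + 1), ((n : ℂ) - ((p : ℂ) - k) * m) * z ^ k := by
  rw [Fin.sum_univ_eq_sum_range (resolventNumerator n m p z)]
  simp only [resolventNumerator]
  rw [Finset.sum_comm]
  refine Finset.sum_congr rfl fun k hk => ?_
  rw [Finset.sum_ite, Finset.sum_const_zero, add_zero, Finset.sum_const, nsmul_eq_mul]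
  have hk : k ≤ p := Nat.lt_succ_iff.mp (Finset.mem_range.mp hk)
  have hkm : (p - k) * m ≤ n := (Nat.mul_le_mul_right m (Nat.sub_le p k)).trans hp
  have hcard : {j ∈ Finset.range n | j + (p - k) * m < n} = Finset.range (n - (p - k) * m) := by
    ext j
    simp only [Finset.mem_filter, Finset.mem_range]
    omega
  rw [hcard, Finset.card_range, Nat.cast_sub hkm, Nat.cast_mul, Nat.cast_sub hk]

theorem smul_sub_shiftMatrix_pow_mulVec_resolventNumerator {n m p : ℕ} (hp : n ≤ (p + 1) * m)
    (z : ℂ) :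
    (z • fun j : Fin n => resolventNumerator n m p z j)
        - shiftMatrix n ^ m *ᵥ (fun j : Fin n => resolventNumerator n m p z j)
      = z ^ (p + 1) • fun _ => 1 := by
  funext j
  have hshift : (shiftMatrix n ^ m *ᵥ fun i : Fin n => resolventNumerator n m p z i) j
      = resolventNumerator n m p z (j + m) := by
    rw [shiftMatrix_pow_mulVec]
    split_ifs with h
    · rfl
    · exact (resolventNumerator_of_le z (not_lt.mp h)).symm
  rw [Pi.sub_apply, hshift, Pi.smul_apply, Pi.smul_apply, smul_eq_mul, smul_eq_mul, mul_one]
  exact resolventNumerator_sub hp z j.isLt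

theorem stmt_4_general (n m : ℕ) (hn : 1 ≤ n) (hm : 1 ≤ m)
    (δ : ℂ) (z : ℂ) (hz : z ≠ 0) (p₁ : ℕ) (hp₁ : p₁ = (n - 1) / m) :
    (∃ v : Fin n → ℂ, v ≠ 0 ∧ (shiftMatrix n ^ m + δ • allOnes n).mulVec v = z • v) ↔
    z ^ (p₁ + 1) - (n : ℂ) * δ *
      ∑ k ∈ Finset.range (p₁ + 1),
        (1 - ((p₁ : ℂ) - (k : ℂ)) * ((m : ℂ) / (n : ℂ))) * z ^ k = 0 := by
  have hp_lower : n ≤ (p₁ + 1) * m := by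
    have hdiv := Nat.lt_div_mul_add (a := n - 1) hm
    rw [hp₁, add_mul, one_mul]
    omega
  have hp_upper : p₁ * m ≤ n := hp₁ ▸ (Nat.div_mul_le_self _ _).trans (Nat.sub_le n 1)
  set g : Fin n → ℂ := fun j => resolventNumerator n m p₁ z j
  have hw : z • ((δ / z ^ (p₁ + 1)) • g) - shiftMatrix n ^ m *ᵥ ((δ / z ^ (p₁ + 1)) • g)
      = fun _ => δ := by
    rw [mulVec_smul, smul_comm, ← smul_sub, smul_sub_shiftMatrix_pow_mulVec_resolventNumerator
      hp_lower, smul_smul, div_mul_cancel₀ _ (pow_ne_zero _ hz)]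
    funext; simp
  have hnil : IsNilpotent (shiftMatrix n ^ m) := (isNilpotent_shiftMatrix n).pow_of_pos (by omega)
  rw [smul_allOnes, exists_eigenvector_add_vecMulVec_iff
    (fun _ => eq_zero_of_mulVec_eq_smul_of_isNilpotent hnil hz) hw]
  have hn0 : (n : ℂ) ≠ 0 := by exact_mod_cast (by omega : n ≠ 0)
  have hcoeff : (n : ℂ) * δ * ∑ k ∈ Finset.range (p₁ + 1),
        (1 - ((p₁ : ℂ) - (k : ℂ)) * ((m : ℂ) / (n : ℂ))) * z ^ k
      = δ * ∑ k ∈ Finset.range (p₁ + 1), ((n : ℂ) - ((p₁ : ℂ) - k) * m) * z ^ k := by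
    simp only [Finset.mul_sum]
    exact Finset.sum_congr rfl fun k _ => by field_simp
  rw [dotProduct_smul, smul_eq_mul, dotProduct, Finset.sum_congr rfl fun _ _ => one_mul _,
    sum_resolventNumerator hp_upper, hcoeff, div_mul_eq_mul_div,
    div_eq_one_iff_eq (pow_ne_zero _ hz), sub_eq_zero, eq_comm]

/-- A nonzero `z` is an eigenvalue of `S^m + δJ` iff
`z^{p₁+1} − nδ Σ_{k=0}^{p₁} (1 − (p₁−k)(m/n)) z^k = 0`, where `p₁ = ⌊(n−1)/m⌋`. -/
theorem stmt_4 (n m : ℕ) (hn : 1 ≤ n) (hm : 1 ≤ m) (hmn : m ≤ n)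
    (δ : ℂ) (hδ : δ ≠ 0) (z : ℂ) (hz : z ≠ 0) (p₁ : ℕ) (hp₁ : p₁ = (n - 1) / m) :
    (∃ v : Fin n → ℂ, v ≠ 0 ∧ (shiftMatrix n ^ m + δ • allOnes n).mulVec v = z • v) ↔
    z ^ (p₁ + 1) - (n : ℂ) * δ *
      ∑ k ∈ Finset.range (p₁ + 1),
        (1 - ((p₁ : ℂ) - (k : ℂ)) * ((m : ℂ) / (n : ℂ))) * z ^ k = 0 :=
  stmt_4_general n m hn hm δ z hz p₁ hp₁
end

section
/- Fix n ≥ 1, m ∈ {1,…,n}, δ > 0, and set p₁ = ⌊(n−1)/m⌋. Every root of the polynomial z^{p₁+1} − nδ Σ_{k=0}^{p₁} (1 − (p₁−k)(m/n)) z^k lies strictly inside the circle |z| = nδ + 1. -/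
/-!
Cauchy's bound: if `z ^ N = ∑_{k<N} b_k z^k` with every `‖b_k‖ ≤ C`, then `r = ‖z‖ ≥ C + 1` would give
`r ^ N ≤ C ∑_{k<N} r ^ k ≤ (r - 1) ∑_{k<N} r ^ k = r ^ N - 1`. Since `p₁ m ≤ n`, every coefficient
`1 - (p₁ - k) m / n` lies in `[0, 1]`, so the bound applies with `C = n δ`.
-/

open Finset

theorem norm_lt_of_pow_eq_sum_mul_pow {𝕜 : Type*} [NormedDivisionRing 𝕜] {N : ℕ} {b : ℕ → 𝕜}
    {C : ℝ} (hb : ∀ k < N, ‖b k‖ ≤ C) {z : 𝕜} (hz : z ^ N = ∑ k ∈ range N, b k * z ^ k) :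
    ‖z‖ < C + 1 := by
  by_contra! hC
  have hsum : ‖z‖ ^ N ≤ C * ∑ k ∈ range N, ‖z‖ ^ k := by
    calc ‖z‖ ^ N = ‖∑ k ∈ range N, b k * z ^ k‖ := by rw [← hz, norm_pow]
      _ ≤ ∑ k ∈ range N, ‖b k‖ * ‖z‖ ^ k := by
          simpa only [norm_mul, norm_pow] using norm_sum_le (range N) fun k ↦ b k * z ^ k
      _ ≤ C * ∑ k ∈ range N, ‖z‖ ^ k := by
          rw [mul_sum]
          gcongr with k hk
          exact hb k (mem_range.mp hk)
  have hgeom : ‖z‖ ^ N - 1 = (‖z‖ - 1) * ∑ k ∈ range N, ‖z‖ ^ k := (mul_geom_sum _ _).symm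
  have hpos : 0 ≤ ∑ k ∈ range N, ‖z‖ ^ k := by positivity
  nlinarith [mul_le_mul_of_nonneg_right (show C ≤ ‖z‖ - 1 by linarith) hpos]

theorem norm_one_sub_mul_div_le_one {n m p k : ℕ} (hpm : p * m ≤ n) (hk : k ≤ p) :
    ‖1 - ((p : ℂ) - k) * ((m : ℂ) / n)‖ ≤ 1 := by
  have hcast : 1 - ((p : ℂ) - k) * ((m : ℂ) / n) = ((1 - ((p - k : ℕ) * m : ℝ) / n : ℝ) : ℂ) := by
    push_cast [Nat.cast_sub hk]
    ring
  have hle : ((p - k : ℕ) * m : ℝ) ≤ n := by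
    exact_mod_cast (Nat.mul_le_mul_right m (Nat.sub_le p k)).trans hpm
  rw [hcast, Complex.norm_real, Real.norm_eq_abs, abs_le]
  constructor
  · linarith [div_le_one_of_le₀ hle (Nat.cast_nonneg n)]
  · linarith [show (0 : ℝ) ≤ ((p - k : ℕ) * m : ℝ) / n by positivity]

theorem stmt_5_general (n m : ℕ)
    (δ : ℝ) (hδ : 0 < δ) (p₁ : ℕ) (hp₁ : p₁ = (n - 1) / m) (z : ℂ)
    (hroot : z ^ (p₁ + 1) - (n : ℂ) * (δ : ℂ) *
      ∑ k ∈ Finset.range (p₁ + 1),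
        (1 - ((p₁ : ℂ) - (k : ℂ)) * ((m : ℂ) / (n : ℂ))) * z ^ k = 0) :
    ‖z‖ < n * δ + 1 := by
  have hpm : p₁ * m ≤ n := hp₁ ▸ (Nat.div_mul_le_self _ _).trans (Nat.sub_le n 1)
  rw [sub_eq_zero, mul_sum] at hroot
  refine norm_lt_of_pow_eq_sum_mul_pow (fun k hk ↦ ?_) (by simpa only [← mul_assoc] using hroot)
  rw [norm_mul, norm_mul, Complex.norm_natCast, Complex.norm_real, Real.norm_of_nonneg hδ.le]
  exact mul_le_of_le_one_right (by positivity)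
    (norm_one_sub_mul_div_le_one hpm (Nat.lt_succ_iff.mp hk))

/-- Every root of `z^{p₁+1} − nδ Σ_{k=0}^{p₁} (1 − (p₁−k)(m/n)) z^k` lies strictly
inside the circle `|z| = nδ + 1`. -/
theorem stmt_5 (n m : ℕ) (hn : 1 ≤ n) (hm : 1 ≤ m) (hmn : m ≤ n)
    (δ : ℝ) (hδ : 0 < δ) (p₁ : ℕ) (hp₁ : p₁ = (n - 1) / m) (z : ℂ)
    (hroot : z ^ (p₁ + 1) - (n : ℂ) * (δ : ℂ) *
      ∑ k ∈ Finset.range (p₁ + 1),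
        (1 - ((p₁ : ℂ) - (k : ℂ)) * ((m : ℂ) / (n : ℂ))) * z ^ k = 0) :
    ‖z‖ < n * δ + 1 :=
  stmt_5_general n m δ hδ p₁ hp₁ z hroot
end

section
/- Suppose nδ > 3 + 2√2, δ > 0, m ∈ {1,…,n}, p₁ = ⌊(n−1)/m⌋ ≥ 1, and let r₋ < r₊ be the two real roots of r² − (nδ+1)r + 2nδ = 0. Then the polynomial P(z) = z^{p₁+1} − nδ Σ_{k=0}^{p₁} (1 − (p₁−k)(m/n)) z^k has exactly p₁ roots (with multiplicity) in the closed disk |z| ≤ r for every r with r₋ < r < r₊; consequently exactly one root lies in the annulus r₊ ≤ |z| < nδ+1 and no root lies in the open annulus r₋ < |z| < r₊. -/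
/-!
Write `P` as `X^(p₁+1) - ∑_{k ≤ p₁} a_k X^k` with real coefficients `0 ≤ a_0 ≤ ⋯ ≤ a_{p₁} = nδ`.
By the intermediate value theorem it has a real root `ρ ∈ [nδ, nδ + 1)`. Dividing by `X - ρ`
leaves a cofactor whose coefficients are again nonnegative and nondecreasing, so by the
Eneström–Kakeya theorem all its roots lie in the closed unit disk. As `1 ≤ r₋` and `r₊ ≤ nδ`,
the root counts follow without Rouché's theorem.
-/

open Polynomial Finset

theorem one_sub_mul_sum_range_add_mul_pow {R : Type*} [CommRing R] (b : ℕ → R) (z : R) (N : ℕ) :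
    (1 - z) * ∑ j ∈ range (N + 1), b j * z ^ j + b N * z ^ (N + 1) =
      b 0 + ∑ j ∈ range N, (b (j + 1) - b j) * z ^ (j + 1) := by
  induction N with
  | zero => simp [sub_mul, mul_comm]
  | succ N ih =>
    rw [sum_range_succ (fun j => b j * z ^ j) (N + 1),
      sum_range_succ (fun j => (b (j + 1) - b j) * z ^ (j + 1)) N]
    linear_combination ih

theorem norm_le_one_of_sum_eq_zero_of_monotone (b : ℕ → ℝ) (N : ℕ) (hb0 : 0 ≤ b 0)
    (hb : ∀ j < N, b j ≤ b (j + 1)) (hbN : 0 < b N) {z : ℂ}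
    (hz : ∑ j ∈ range (N + 1), (b j : ℂ) * z ^ j = 0) : ‖z‖ ≤ 1 := by
  by_contra! hz1
  have habel := one_sub_mul_sum_range_add_mul_pow (fun j => (b j : ℂ)) z N
  simp only [hz, mul_zero, zero_add] at habel
  have hle : b N * ‖z‖ ^ (N + 1) ≤ b N * ‖z‖ ^ N := calc
    b N * ‖z‖ ^ (N + 1) = ‖(b N : ℂ) * z ^ (N + 1)‖ := by simp [norm_pow, abs_of_pos hbN]
    _ ≤ b 0 + ∑ j ∈ range N, (b (j + 1) - b j) * ‖z‖ ^ (j + 1) := by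
        rw [habel]
        refine (norm_add_le _ _).trans (add_le_add (by simp [abs_of_nonneg hb0]) ?_)
        refine (norm_sum_le _ _).trans (sum_le_sum fun j hj => ?_)
        rw [norm_mul, norm_pow, ← Complex.ofReal_sub, Complex.norm_real, Real.norm_eq_abs,
          abs_of_nonneg (sub_nonneg.mpr (hb j (mem_range.mp hj)))]
    _ ≤ b 0 * ‖z‖ ^ N + ∑ j ∈ range N, (b (j + 1) - b j) * ‖z‖ ^ N := by
        gcongr with j hj
        · exact le_mul_of_one_le_right hb0 (one_le_pow₀ hz1.le)
        · exact sub_nonneg.mpr (hb j (mem_range.mp hj))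
        · exact hz1.le
        · exact mem_range.mp hj
    _ = b N * ‖z‖ ^ N := by rw [← sum_mul, sum_range_sub (fun j => b j)]; ring
  have hpos : 0 < b N * ‖z‖ ^ N := by positivity
  rw [pow_succ, ← mul_assoc] at hle
  nlinarith

theorem nonneg_and_monotone_of_mul_succ_eq_add {a q : ℕ → ℝ} {ρ : ℝ} {N : ℕ} (hρ : 0 < ρ)
    (ha0 : 0 ≤ a 0) (ha : Monotone a) (hq0 : ρ * q 0 = a 0)
    (hq : ∀ j < N, ρ * q (j + 1) = q j + a (j + 1)) :
    0 ≤ q 0 ∧ ∀ j < N, q j ≤ q (j + 1) := by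
  have hq0_nonneg : 0 ≤ q 0 := by nlinarith
  -- with this invariant, `ρ q_{j+1} = q_j + a_{j+1} ≥ q_j + (ρ - 1) q_j = ρ q_j`
  have hinv : ∀ j ≤ N, (ρ - 1) * q j ≤ a j := by
    intro j hj
    induction j with
    | zero => nlinarith
    | succ j ih => nlinarith [ih (by omega), hq j (by omega), ha (Nat.le_succ j)]
  exact ⟨hq0_nonneg, fun j hj => by nlinarith [hinv j hj.le, hq j hj, ha (Nat.le_succ j)]⟩

theorem degree_sum_range_C_mul_X_pow_lt {R : Type*} [Semiring R] (a : ℕ → R) (N : ℕ) :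
    (∑ k ∈ range N, C (a k) * X ^ k).degree < (N : WithBot ℕ) := by
  rw [degree_lt_iff_coeff_zero]
  intro m hm
  simp [coeff_X_pow, show ¬m < N by omega]

noncomputable def cauchyPoly (a : ℕ → ℝ) (N : ℕ) : ℝ[X] :=
  X ^ (N + 1) - ∑ k ∈ range (N + 1), C (a k) * X ^ k

namespace cauchyPoly

variable (a : ℕ → ℝ) (N : ℕ)

theorem coeff_of_le {k : ℕ} (hk : k ≤ N) : (cauchyPoly a N).coeff k = -a k := by
  simp [cauchyPoly, coeff_X_pow, hk, show k ≠ N + 1 by omega]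

theorem monic : (cauchyPoly a N).Monic := monic_X_pow_sub (degree_sum_range_C_mul_X_pow_lt a _)

theorem natDegree_eq : (cauchyPoly a N).natDegree = N + 1 := by
  refine natDegree_eq_of_degree_eq_some ?_
  rw [cauchyPoly, degree_sub_eq_left_of_degree_lt]
  · simp
  · simpa using degree_sum_range_C_mul_X_pow_lt a (N + 1)

variable {a N}

theorem exists_isRoot_mem_Ico (ha0 : 0 ≤ a 0) (ha : Monotone a) :
    ∃ ρ ∈ Set.Ico (a N) (a N + 1), (cauchyPoly a N).IsRoot ρ := by
  have heval : ∀ x, (cauchyPoly a N).eval x = x ^ (N + 1) - ∑ k ∈ range (N + 1), a k * x ^ k := by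
    intro x
    simp [cauchyPoly, eval_finsetSum]
  have ha_nonneg : ∀ k, 0 ≤ a k := fun k => ha0.trans (ha k.zero_le)
  have hle : (cauchyPoly a N).eval (a N) ≤ 0 := by
    rw [heval, sum_range_succ, pow_succ']
    have := sum_nonneg fun k (_ : k ∈ range N) =>
      mul_nonneg (ha_nonneg k) (pow_nonneg (ha_nonneg N) k)
    linarith
  have hpos : 0 < (cauchyPoly a N).eval (a N + 1) := by
    have hgeom := geom_sum_mul (a N + 1) (N + 1)
    rw [add_sub_cancel_right] at hgeom
    have : ∑ k ∈ range (N + 1), a k * (a N + 1) ^ k ≤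
        (∑ k ∈ range (N + 1), (a N + 1) ^ k) * a N := by
      rw [sum_mul]
      refine sum_le_sum fun k hk => ?_
      rw [mul_comm]
      exact mul_le_mul_of_nonneg_left (ha (Nat.lt_succ_iff.mp (mem_range.mp hk)))
        (pow_nonneg (by linarith [ha_nonneg N]) k)
    rw [heval]
    linarith
  exact intermediate_value_Ico (by linarith) (cauchyPoly a N).continuous.continuousOn ⟨hle, hpos⟩

theorem coeff_cofactor_monotone (ha0 : 0 ≤ a 0) (ha : Monotone a) {ρ : ℝ} (hρ : 0 < ρ)
    {Q : ℝ[X]} (hQ : cauchyPoly a N = (X - C ρ) * Q) :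
    0 ≤ Q.coeff 0 ∧ ∀ j < N, Q.coeff j ≤ Q.coeff (j + 1) := by
  refine nonneg_and_monotone_of_mul_succ_eq_add hρ ha0 ha ?_ fun j hj => ?_
  · have := congrArg (coeff · 0) hQ
    simp only [coeff_of_le a N (Nat.zero_le N), mul_coeff_zero, coeff_sub, coeff_X_zero,
      coeff_C_zero, zero_sub, neg_mul, neg_inj] at this
    exact this.symm
  · have := congrArg (coeff · (j + 1)) hQ
    simp only [coeff_of_le a N hj, coeff_X_sub_C_mul] at this
    linarith

theorem exists_roots_map_eq_cons (ha0 : 0 ≤ a 0) (ha : Monotone a) {ρ : ℝ} (hρ : 0 < ρ)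
    (hroot : (cauchyPoly a N).IsRoot ρ) :
    ∃ s : Multiset ℂ, ((cauchyPoly a N).map (algebraMap ℝ ℂ)).roots = (ρ : ℂ) ::ₘ s ∧
      Multiset.card s = N ∧ ∀ w ∈ s, ‖w‖ ≤ 1 := by
  set Q := cauchyPoly a N /ₘ (X - C ρ)
  have hfac : cauchyPoly a N = (X - C ρ) * Q := (mul_divByMonic_eq_iff_isRoot.mpr hroot).symm
  have hQ : Q.Monic := (monic_X_sub_C ρ).of_mul_monic_left (hfac ▸ monic a N)
  have hQdeg : Q.natDegree = N := by
    have := natDegree_eq a N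
    rw [hfac, (monic_X_sub_C ρ).natDegree_mul' hQ.ne_zero, natDegree_X_sub_C] at this
    omega
  obtain ⟨hQ0, hQmono⟩ := coeff_cofactor_monotone ha0 ha hρ hfac
  refine ⟨(Q.map (algebraMap ℝ ℂ)).roots, ?_, ?_, fun w hw => ?_⟩
  · rw [hfac, Polynomial.map_mul, roots_mul, Polynomial.map_sub, map_X, map_C, roots_X_sub_C]
    · rfl
    · exact (((monic_X_sub_C ρ).map _).mul (hQ.map _)).ne_zero
  · rw [IsAlgClosed.card_roots_eq_natDegree, natDegree_map, hQdeg]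
  · have hw' : aeval w Q = 0 := by
      simpa [aeval_def, eval_map] using (mem_roots (hQ.map _).ne_zero).mp hw
    rw [aeval_eq_sum_range, hQdeg] at hw'
    refine norm_le_one_of_sum_eq_zero_of_monotone Q.coeff N hQ0 hQmono ?_ ?_
    · rw [← hQdeg, ← leadingCoeff, hQ.leadingCoeff]
      exact one_pos
    · simpa [Complex.real_smul] using hw'

end cauchyPoly

theorem exists_roots_eq_cons_norm_le_one {n m p₁ : ℕ} {δ : ℝ} (hA : 0 < (n : ℝ) * δ) (hp₁ : p₁ * m ≤ n) :
    ∃ ρ : ℝ, (n : ℝ) * δ ≤ ρ ∧ ρ < (n : ℝ) * δ + 1 ∧ ∃ s : Multiset ℂ,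
      (X ^ (p₁ + 1) - C ((n : ℂ) * (δ : ℂ)) * ∑ k ∈ range (p₁ + 1),
        C (1 - ((p₁ : ℂ) - (k : ℂ)) * ((m : ℂ) / (n : ℂ))) * X ^ k).roots = (ρ : ℂ) ::ₘ s ∧
      Multiset.card s = p₁ ∧ ∀ w ∈ s, ‖w‖ ≤ 1 := by
  set a : ℕ → ℝ := fun k => n * δ * (1 - ((p₁ : ℝ) - k) * ((m : ℝ) / n)) with ha_def
  have ha0 : 0 ≤ a 0 := by
    have : (p₁ : ℝ) * ((m : ℝ) / n) ≤ 1 := by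
      rw [← mul_div_assoc]
      exact div_le_one_of_le₀ (by exact_mod_cast hp₁) n.cast_nonneg
    simp only [ha_def]
    nlinarith
  have ha : Monotone a := fun i j hij => by
    simp only [ha_def]
    gcongr
  have hmap : (cauchyPoly a p₁).map (algebraMap ℝ ℂ) = X ^ (p₁ + 1) - C ((n : ℂ) * (δ : ℂ)) *
      ∑ k ∈ range (p₁ + 1), C (1 - ((p₁ : ℂ) - (k : ℂ)) * ((m : ℂ) / (n : ℂ))) * X ^ k := by
    rw [cauchyPoly, Polynomial.map_sub, Polynomial.map_sum, mul_sum]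
    simp only [Polynomial.map_pow, map_X, Polynomial.map_mul, map_C]
    congr 1
    refine sum_congr rfl fun k _ => ?_
    rw [← mul_assoc, ← C_mul]
    simp [ha_def]
  obtain ⟨ρ, hρ, hroot⟩ := cauchyPoly.exists_isRoot_mem_Ico ha0 ha
  have haN : a p₁ = n * δ := by simp [ha_def]
  rw [haN] at hρ
  obtain ⟨s, hroots, hs⟩ := cauchyPoly.exists_roots_map_eq_cons ha0 ha (hA.trans_le hρ.1) hroot
  exact ⟨ρ, hρ.1, hρ.2, s, hmap ▸ hroots, hs⟩

open scoped Classical in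
theorem card_filter_norm_cons {s : Multiset ℂ} (hs : ∀ w ∈ s, ‖w‖ ≤ 1) {ρ B rm rp : ℝ}
    (hrm : 1 ≤ rm) (hrp : 1 < rp) (hrpρ : rp ≤ ρ) (hρB : ρ < B) :
    (∀ r : ℝ, rm < r → r < rp →
      (((ρ : ℂ) ::ₘ s).filter (fun z => ‖z‖ ≤ r)).card = Multiset.card s) ∧
    (((ρ : ℂ) ::ₘ s).filter (fun z => rp ≤ ‖z‖ ∧ ‖z‖ < B)).card = 1 ∧
    (((ρ : ℂ) ::ₘ s).filter (fun z => rm < ‖z‖ ∧ ‖z‖ < rp)).card = 0 := by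
  have hρ : ‖(ρ : ℂ)‖ = ρ := by simpa using (zero_lt_one.trans (hrp.trans_le hrpρ)).le
  refine ⟨fun r hr hr' => ?_, ?_, ?_⟩
  · rw [Multiset.filter_cons_of_neg _ (by rw [hρ]; linarith),
      Multiset.filter_eq_self.mpr fun w hw => by linarith [hs w hw]]
  · rw [Multiset.filter_cons_of_pos _ (by rw [hρ]; exact ⟨hrpρ, hρB⟩),
      Multiset.filter_eq_nil.mpr fun w hw hw' => by linarith [hs w hw, hw'.1]]
    rfl
  · rw [Multiset.filter_cons_of_neg _ (by rw [hρ]; exact fun hlt => hlt.2.not_ge hrpρ),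
      Multiset.filter_eq_nil.mpr fun w hw hw' => by linarith [hs w hw, hw'.1]]
    rfl

theorem sqrt_sq_add_one_sub_eight_mul_le {A : ℝ} (hA : 1 ≤ A) :
    √((A + 1) ^ 2 - 8 * A) ≤ A - 1 :=
  Real.sqrt_le_iff.mpr ⟨by linarith, by nlinarith⟩

open scoped Classical in
theorem stmt_8_general (n m : ℕ)
    (δ : ℝ) (h : (n : ℝ) * δ > 3 + 2 * Real.sqrt 2)
    (p₁ : ℕ) (hp₁ : p₁ = (n - 1) / m)
    (rm rp : ℝ)
    (hrm : rm = ((n : ℝ) * δ + 1 - Real.sqrt (((n : ℝ) * δ + 1) ^ 2 - 8 * (n : ℝ) * δ)) / 2)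
    (hrp : rp = ((n : ℝ) * δ + 1 + Real.sqrt (((n : ℝ) * δ + 1) ^ 2 - 8 * (n : ℝ) * δ)) / 2)
    (P : Polynomial ℂ)
    (hP : P = X ^ (p₁ + 1) - C ((n : ℂ) * (δ : ℂ)) *
      ∑ k ∈ Finset.range (p₁ + 1),
        C (1 - ((p₁ : ℂ) - (k : ℂ)) * ((m : ℂ) / (n : ℂ))) * X ^ k) :
    (∀ r : ℝ, rm < r → r < rp →
      (P.roots.filter (fun z => ‖z‖ ≤ r)).card = p₁) ∧
    (P.roots.filter (fun z => rp ≤ ‖z‖ ∧ ‖z‖ < (n : ℝ) * δ + 1)).card = 1 ∧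
    (P.roots.filter (fun z => rm < ‖z‖ ∧ ‖z‖ < rp)).card = 0 := by
  set A := (n : ℝ) * δ
  have hA : 1 < A := by linarith [Real.sqrt_nonneg 2]
  have hp₁m : p₁ * m ≤ n := hp₁ ▸ (Nat.div_mul_le_self (n - 1) m).trans (n.sub_le 1)
  obtain ⟨ρ, hAρ, hρA, s, hroots, hcard, hs⟩ := exists_roots_eq_cons_norm_le_one (zero_lt_one.trans hA) hp₁m
  have hsqrt := sqrt_sq_add_one_sub_eight_mul_le hA.le
  rw [show 8 * (n : ℝ) * δ = 8 * A by ring] at hrm hrp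
  have hrm1 : 1 ≤ rm := by rw [hrm]; linarith
  have hrp1 : 1 < rp := by rw [hrp]; linarith [Real.sqrt_nonneg ((A + 1) ^ 2 - 8 * A)]
  have hrpρ : rp ≤ ρ := by rw [hrp]; linarith
  rw [hP, hroots, ← hcard]
  exact card_filter_norm_cons hs hrm1 hrp1 hrpρ hρA

open scoped Classical in
/-- Root localization by Rouché: under `nδ > 3 + 2√2`, the eigenvalue polynomial
`P(z) = z^{p₁+1} − nδ Σ_{k=0}^{p₁} (1 − (p₁−k)(m/n)) z^k` has exactly `p₁` roots
(with multiplicity) in every closed disk `|z| ≤ r` with `r₋ < r < r₊`; exactly one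
root lies in the annulus `r₊ ≤ |z| < nδ+1`, and no root lies in `r₋ < |z| < r₊`. -/
theorem stmt_8 (n m : ℕ) (hn : 1 ≤ n) (hm : 1 ≤ m) (hmn : m ≤ n)
    (δ : ℝ) (hδ : 0 < δ) (h : (n : ℝ) * δ > 3 + 2 * Real.sqrt 2)
    (p₁ : ℕ) (hp₁ : p₁ = (n - 1) / m) (hp₁1 : 1 ≤ p₁)
    (rm rp : ℝ)
    (hrm : rm = ((n : ℝ) * δ + 1 - Real.sqrt (((n : ℝ) * δ + 1) ^ 2 - 8 * (n : ℝ) * δ)) / 2)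
    (hrp : rp = ((n : ℝ) * δ + 1 + Real.sqrt (((n : ℝ) * δ + 1) ^ 2 - 8 * (n : ℝ) * δ)) / 2)
    (P : Polynomial ℂ)
    (hP : P = X ^ (p₁ + 1) - C ((n : ℂ) * (δ : ℂ)) *
      ∑ k ∈ Finset.range (p₁ + 1),
        C (1 - ((p₁ : ℂ) - (k : ℂ)) * ((m : ℂ) / (n : ℂ))) * X ^ k) :
    (∀ r : ℝ, rm < r → r < rp →
      (P.roots.filter (fun z => ‖z‖ ≤ r)).card = p₁) ∧
    (P.roots.filter (fun z => rp ≤ ‖z‖ ∧ ‖z‖ < (n : ℝ) * δ + 1)).card = 1 ∧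
    (P.roots.filter (fun z => rm < ‖z‖ ∧ ‖z‖ < rp)).card = 0 :=
  stmt_8_general n m δ h p₁ hp₁ rm rp hrm hrp P hP
end

section
/- For integers n ≥ 2 and m with ⌈√(n−1)⌉ ≤ m ≤ n−1: if m belongs to the set T_{n−1} = {⌊(n−1)/k⌋ : k = 1,…,n−1} then ⌊(n−1)/m⌋ − ⌊(n−1)/(m+1)⌋ = 1, and if m does not belong to T_{n−1} then ⌊(n−1)/m⌋ − ⌊(n−1)/(m+1)⌋ = 0. -/
/-!
Write `N = n - 1`. A natural number `m` is a value `⌊N / k⌋` with `1 ≤ k ≤ N` exactly when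
`⌊N / (m + 1)⌋ < ⌊N / m⌋` (the witness being `k = ⌊N / m⌋`), so the difference vanishes off `T_N`.
On `T_N` it is exactly `1`, because `m ≥ √N` forces `⌊N / m⌋ ≤ m`, and then consecutive quotients
differ by at most one.
-/

namespace Nat

theorem div_le_div_succ_add_one {N m : ℕ} (h : N / m ≤ m + 1) : N / m ≤ N / (m + 1) + 1 := by
  -- `(q - 1)(m + 1) = q m - (m + 1 - q)` with `q = N / m`
  suffices (N / m - 1) * (m + 1) ≤ N by
    have := (Nat.le_div_iff_mul_le m.add_one_pos).2 this
    omega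
  have hq : N / m * m ≤ N := Nat.div_mul_le_self N m
  obtain h0 | hpos := Nat.eq_zero_or_pos (N / m)
  · simp [h0]
  · obtain ⟨c, hc⟩ := Nat.exists_eq_add_one.2 hpos
    rw [hc] at hq h ⊢
    rw [Nat.add_sub_cancel]
    nlinarith

theorem exists_eq_div_iff_div_succ_lt_div (N m : ℕ) :
    (∃ k, 1 ≤ k ∧ k ≤ N ∧ m = N / k) ↔ N / (m + 1) < N / m := by
  constructor
  · rintro ⟨k, hk, hkN, rfl⟩
    have hm : 0 < N / k := Nat.div_pos hkN hk
    have hle : k ≤ N / (N / k) := (Nat.le_div_iff_mul_le hm).2 (Nat.mul_div_le N k)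
    have hlt : N / (N / k + 1) < k := Nat.div_lt_of_lt_mul <| by
      rw [Nat.mul_comm]; exact Nat.lt_mul_div_succ N hk
    omega
  · intro hlt
    refine ⟨N / m, (Nat.zero_le _).trans_lt hlt, Nat.div_le_self N m, ?_⟩
    refine (Nat.div_eq_of_lt_le ?_ ?_).symm
    · rw [Nat.mul_comm]
      exact Nat.div_mul_le_self N m
    · rw [Nat.mul_comm]
      exact (Nat.div_lt_iff_lt_mul m.add_one_pos).1 (by omega)

theorem sub_one_le_mul_self_of_ceil_sqrt_le {n m : ℕ}
    (h : ⌈Real.sqrt ((n : ℝ) - 1)⌉ ≤ (m : ℤ)) : n - 1 ≤ m * m := by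
  have hsq : (n : ℝ) - 1 ≤ (m : ℝ) ^ 2 :=
    (Real.sqrt_le_iff.1 (by exact_mod_cast Int.ceil_le.1 h)).2
  have : n ≤ m * m + 1 := by exact_mod_cast (by nlinarith : (n : ℝ) ≤ m * m + 1)
  omega

end Nat

theorem stmt_15_general (n m : ℕ)
    (hm_lo : ⌈Real.sqrt ((n : ℝ) - 1)⌉ ≤ (m : ℤ)) :
    ((∃ k : ℕ, 1 ≤ k ∧ k ≤ n - 1 ∧ m = (n - 1) / k) →
      (n - 1) / m - (n - 1) / (m + 1) = 1) ∧
    ((¬ ∃ k : ℕ, 1 ≤ k ∧ k ≤ n - 1 ∧ m = (n - 1) / k) →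
      (n - 1) / m - (n - 1) / (m + 1) = 0) := by
  rw [Nat.exists_eq_div_iff_div_succ_lt_div]
  have hquot : (n - 1) / m ≤ m :=
    Nat.div_le_of_le_mul (Nat.sub_one_le_mul_self_of_ceil_sqrt_le hm_lo)
  have hstep := Nat.div_le_div_succ_add_one (N := n - 1) (by omega : (n - 1) / m ≤ m + 1)
  constructor <;> intro h <;> omega

/-- For `⌈√(n−1)⌉ ≤ m ≤ n−1`: if `m ∈ T_{n−1} = {⌊(n−1)/k⌋ : 1 ≤ k ≤ n−1}` then
`⌊(n−1)/m⌋ − ⌊(n−1)/(m+1)⌋ = 1`, and otherwise this difference is `0`. -/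
theorem stmt_15 (n m : ℕ) (hn : 2 ≤ n)
    (hm_lo : ⌈Real.sqrt ((n : ℝ) - 1)⌉ ≤ (m : ℤ)) (hm_hi : m ≤ n - 1) :
    ((∃ k : ℕ, 1 ≤ k ∧ k ≤ n - 1 ∧ m = (n - 1) / k) →
      (n - 1) / m - (n - 1) / (m + 1) = 1) ∧
    ((¬ ∃ k : ℕ, 1 ≤ k ∧ k ≤ n - 1 ∧ m = (n - 1) / k) →
      (n - 1) / m - (n - 1) / (m + 1) = 0) :=
  stmt_15_general n m hm_lo
end

section
/- Fix p₁ ≥ 1 and let m, n, δ satisfy the model-1 setting. The eigenvalue polynomial admits the algebraic identity: z^{p₁+1} − nδ Σ_{k=0}^{p₁} (1 − (p₁−k)(m/n)) z^k = (z − λ₊)(z − λ₋) Σ_{k=0}^{p₁−1} (p₁−k) z^k + (p₁+1)( z − (nδ + 1 − 1/(p₁+1)) ), where λ± are the two roots of z² − (nδ+2)z + 1 + nδ(1 + m/n) = 0. -/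
/-!
Write `S_p(z) = ∑_{k<p} (p - k) zᵏ`. Telescoping gives `(z - 1) S_p = ∑_{k≤p} zᵏ - (p + 1)`, and
multiplying once more by `z - 1` gives `(z - 1)² S_p = z^{p+1} - (p + 1) z + p`. Since
`(z - λ₊)(z - λ₋) = (z - 1)² - nδ (z - 1) + nδ m/n` by Vieta, both sides of the identity reduce to
`z^{p+1} - nδ ∑_{k≤p} zᵏ + nδ (m/n) S_p`.
-/

open Finset

section

variable {R : Type*} [CommRing R]

lemma sum_range_succ_sub_mul_pow_eq (z : R) (p : ℕ) :
    ∑ k ∈ range (p + 1), ((p : R) - k) * z ^ k = ∑ k ∈ range p, ((p : R) - k) * z ^ k := by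
  simp [sum_range_succ]

lemma sub_one_mul_sum_range_sub_mul_pow (z : R) (p : ℕ) :
    (z - 1) * ∑ k ∈ range p, ((p : R) - k) * z ^ k = ∑ k ∈ range (p + 1), z ^ k - (p + 1) := by
  induction p with
  | zero => simp
  | succ p ih =>
    have hsplit : ∑ k ∈ range (p + 1), (((p + 1 : ℕ) : R) - k) * z ^ k
        = ∑ k ∈ range (p + 1), ((p : R) - k) * z ^ k + ∑ k ∈ range (p + 1), z ^ k := by
      rw [← sum_add_distrib]
      refine sum_congr rfl fun k _ => ?_
      push_cast
      ring
    rw [hsplit, sum_range_succ_sub_mul_pow_eq, mul_add, ih, mul_comm, geom_sum_mul,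
      sum_range_succ _ (p + 1)]
    push_cast
    ring

lemma pow_succ_sub_mul_sum_eq (a b z : R) (p : ℕ) :
    z ^ (p + 1) - a * ∑ k ∈ range (p + 1), (1 - ((p : R) - k) * b) * z ^ k =
      (z ^ 2 - (a + 2) * z + 1 + a * (1 + b)) * ∑ k ∈ range p, ((p : R) - k) * z ^ k +
        ((p : R) + 1) * (z - (a + 1)) + 1 := by
  have hlhs : ∑ k ∈ range (p + 1), (1 - ((p : R) - k) * b) * z ^ k
      = ∑ k ∈ range (p + 1), z ^ k - b * ∑ k ∈ range p, ((p : R) - k) * z ^ k := by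
    rw [← sum_range_succ_sub_mul_pow_eq, mul_sum, ← sum_sub_distrib]
    exact sum_congr rfl fun k _ => by ring
  have hS := sub_one_mul_sum_range_sub_mul_pow z p
  have hgeom := geom_sum_mul z (p + 1)
  rw [hlhs]
  linear_combination (a - z + 1) * hS - hgeom

end

theorem stmt_18_general (n m : ℕ)
    (δ : ℂ) (p₁ : ℕ)
    (lamP lamM : ℂ)
    (hsum : lamP + lamM = (n : ℂ) * δ + 2)
    (hprod : lamP * lamM = 1 + (n : ℂ) * δ * (1 + (m : ℂ) / (n : ℂ))) (z : ℂ) :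
    z ^ (p₁ + 1) - (n : ℂ) * δ *
        ∑ k ∈ Finset.range (p₁ + 1),
          (1 - ((p₁ : ℂ) - (k : ℂ)) * ((m : ℂ) / (n : ℂ))) * z ^ k =
      (z - lamP) * (z - lamM) *
        ∑ k ∈ Finset.range p₁, ((p₁ : ℂ) - (k : ℂ)) * z ^ k +
      ((p₁ : ℂ) + 1) * (z - ((n : ℂ) * δ + 1 - 1 / ((p₁ : ℂ) + 1))) := by
  have hcore := pow_succ_sub_mul_sum_eq ((n : ℂ) * δ) ((m : ℂ) / (n : ℂ)) z p₁
  have hinv : ((p₁ : ℂ) + 1) * (1 / ((p₁ : ℂ) + 1)) = 1 :=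
    mul_one_div_cancel (Nat.cast_add_one_ne_zero p₁)
  set S := ∑ k ∈ range p₁, ((p₁ : ℂ) - k) * z ^ k
  linear_combination hcore + z * S * hsum - S * hprod - hinv

/-- Algebraic factorization identity for the model-1 eigenvalue polynomial:
`z^{p₁+1} − nδ Σ_{k=0}^{p₁} (1 − (p₁−k)(m/n)) z^k
 = (z − λ₊)(z − λ₋) Σ_{k=0}^{p₁−1} (p₁−k) z^k + (p₁+1)(z − (nδ + 1 − 1/(p₁+1)))`,
where `λ±` are the two roots of `z² − (nδ+2)z + 1 + nδ(1 + m/n) = 0`. -/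
theorem stmt_18 (n m : ℕ) (hn : 1 ≤ n) (hm : 1 ≤ m) (hmn : m ≤ n)
    (δ : ℂ) (p₁ : ℕ) (hp₁ : p₁ = (n - 1) / m) (hp₁1 : 1 ≤ p₁)
    (lamP lamM : ℂ)
    (hsum : lamP + lamM = (n : ℂ) * δ + 2)
    (hprod : lamP * lamM = 1 + (n : ℂ) * δ * (1 + (m : ℂ) / (n : ℂ))) (z : ℂ) :
    z ^ (p₁ + 1) - (n : ℂ) * δ *
        ∑ k ∈ Finset.range (p₁ + 1),
          (1 - ((p₁ : ℂ) - (k : ℂ)) * ((m : ℂ) / (n : ℂ))) * z ^ k =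
      (z - lamP) * (z - lamM) *
        ∑ k ∈ Finset.range p₁, ((p₁ : ℂ) - (k : ℂ)) * z ^ k +
      ((p₁ : ℂ) + 1) * (z - ((n : ℂ) * δ + 1 - 1 / ((p₁ : ℂ) + 1))) :=
  stmt_18_general n m δ p₁ lamP lamM hsum hprod z
end
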